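/- arXiv:1511.00476 — 3 statements merged into one kernel-verified Lean document; each statement's English description precedes it below -/
import Mathlib

section
/- Let (S, θ) be an ID-simple ring (a nonzero commutative ring with iterative derivation having no nontrivial ID-ideals). Then S is an integral domain. -/
/-- An ID-simple ring (a nonzero commutative ring with an
iterative derivation having no nontrivial ID-ideals) is an integral domain. -/
theorem stmt8 (S : Type) [CommRing S] [Nontrivial S] (θ : ℕ → S → S)
    (hadd : ∀ (n : ℕ) (a b : S), θ n (a + b) = θ n a + θ n b)
    (h0 : ∀ s : S, θ 0 s = s)
    (hleib : ∀ (n : ℕ) (a b : S),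
      θ n (a * b) = ∑ p ∈ Finset.HasAntidiagonal.antidiagonal n, θ p.1 a * θ p.2 b)
    (hiter : ∀ (i j : ℕ) (s : S), θ i (θ j s) = (i + j).choose i • θ (i + j) s)
    (hsimple : ∀ I : Ideal S, (∀ (n : ℕ) (s : S), s ∈ I → θ n s ∈ I) →
      I = ⊥ ∨ I = ⊤) :
    IsDomain S := by
  classical
  have hzero : ∀ n, θ n (0 : S) = 0 := by
    intro n
    have h := hadd n 0 0
    rw [add_zero] at h
    linear_combination -h
  obtain ⟨m, hm⟩ := Ideal.exists_maximal S
  have key : ∀ x : S, x ≠ 0 → ∃ n, θ n x ∉ m := by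
    intro x hx
    by_contra hcon
    push_neg at hcon
    set J : Ideal S := Ideal.span (Set.range fun p : ℕ × S => p.2 * θ p.1 x) with hJ
    have hmem : ∀ s ∈ J, ∀ n, θ n s ∈ J := by
      intro s hs
      induction hs using Submodule.span_induction with
      | mem y hy =>
          obtain ⟨⟨k, t⟩, rfl⟩ := hy
          intro n
          rw [hleib]
          refine Ideal.sum_mem _ ?_
          rintro ⟨i, j⟩ hij
          rw [hiter, mul_smul_comm]
          have hgen : θ i t * θ (j + k) x ∈ J := by
            rw [hJ]
            exact Ideal.subset_span ⟨(j + k, θ i t), rfl⟩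
          exact nsmul_mem hgen _
      | zero => intro n; rw [hzero]; exact J.zero_mem
      | add y z _ _ hy hz => intro n; rw [hadd]; exact J.add_mem (hy n) (hz n)
      | smul r y _ hy =>
          intro n
          rw [smul_eq_mul, hleib]
          refine Ideal.sum_mem _ ?_
          rintro ⟨i, j⟩ hij
          exact Ideal.mul_mem_left _ _ (hy j)
    have hx' : x ∈ J := by
      have h1 : (1 : S) * θ 0 x ∈ J := by
        rw [hJ]
        exact Ideal.subset_span ⟨(0, 1), rfl⟩
      simpa [h0] using h1
    rcases hsimple J (fun n s hs => hmem s hs n) with h | h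
    · rw [h] at hx'; exact hx (by simpa using hx')
    · have hle : J ≤ m := by
        rw [hJ]
        refine Ideal.span_le.mpr ?_
        rintro y ⟨⟨k, t⟩, rfl⟩
        exact Ideal.mul_mem_left _ _ (hcon k)
      have h1 : (1 : S) ∈ m := hle (h ▸ Submodule.mem_top)
      exact hm.ne_top (Ideal.eq_top_of_isUnit_mem _ h1 isUnit_one)
  have main : ∀ a b : S, a ≠ 0 → b ≠ 0 → a * b ≠ 0 := by
    intro a b ha hb hab
    set p := Nat.find (key a ha) with hp
    set q := Nat.find (key b hb) with hq
    have hpa : θ p a ∉ m := Nat.find_spec (key a ha)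
    have hqb : θ q b ∉ m := Nat.find_spec (key b hb)
    have hmin_a : ∀ i < p, θ i a ∈ m := fun i hi =>
      not_not.mp (Nat.find_min (key a ha) hi)
    have hmin_b : ∀ j < q, θ j b ∈ m := fun j hj =>
      not_not.mp (Nat.find_min (key b hb) hj)
    have hexp := hleib (p + q) a b
    have hpq_mem : ((p, q) : ℕ × ℕ) ∈ Finset.HasAntidiagonal.antidiagonal (p + q) := by simp
    rw [← Finset.add_sum_erase _ _ hpq_mem] at hexp
    have hrest : ∑ x ∈ (Finset.HasAntidiagonal.antidiagonal (p + q)).erase (p, q),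
        θ x.1 a * θ x.2 b ∈ m := by
      refine Ideal.sum_mem _ ?_
      rintro ⟨i, j⟩ hij
      rw [Finset.mem_erase, Finset.HasAntidiagonal.mem_antidiagonal] at hij
      obtain ⟨hne, hij⟩ := hij
      rcases lt_or_ge i p with h | h
      · exact Ideal.mul_mem_right _ _ (hmin_a i h)
      · have hj : j < q := by
          by_contra hj'
          push_neg at hj'
          have hip : i = p ∧ j = q := by omega
          exact hne (by simp [hip.1, hip.2])
        exact Ideal.mul_mem_left _ _ (hmin_b j hj)
    have hnot : θ (p + q) (a * b) ∉ m := by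
      rw [hexp]
      intro hmemm
      have hprod : θ p a * θ q b ∈ m := by
        have hs := Ideal.sub_mem m hmemm hrest
        simpa using hs
      rcases hm.isPrime.mem_or_mem hprod with h | h
      exacts [hpa h, hqb h]
    exact hnot (by rw [hab, hzero]; exact m.zero_mem)
  have hnzd : NoZeroDivisors S := ⟨fun {a b} h => by
    by_contra hc
    push_neg at hc
    exact main a b hc.1 hc.2 h⟩
  exact NoZeroDivisors.to_isDomain S
end

section
/- Let (S, θ) be an ID-simple ring, 𝔪 a maximal ideal of S with residue field k = S/𝔪. Then the map S → k[[t]], s ↦ Σ_{n≥0} (θ^(n)(s) mod 𝔪) t^n, is an injective ring homomorphism commuting with the iterative derivations, where k[[t]] carries the iterative derivation θ_t(f(t)) = f(t+T). -/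
open PowerSeries

/-- Let `(S,θ)` be an ID-simple ring and `𝔪` a maximal ideal
with residue field `k = S/𝔪`.  Then `s ↦ Σ_n (θ^(n)(s) mod 𝔪) t^n` is an
injective ring homomorphism `S → k[[t]]` commuting with the iterative
derivations, where `k[[t]]` carries `θ_t(f(t)) = f(t+T)`, whose coefficient
maps are `coeff_m (θ_t^(n) g) = C(m+n,n) · coeff_{m+n} g`. -/
theorem stmt10 (S : Type) [CommRing S] [Nontrivial S] (θ : ℕ → S → S)
    (hadd : ∀ (n : ℕ) (a b : S), θ n (a + b) = θ n a + θ n b)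
    (h0 : ∀ s : S, θ 0 s = s)
    (hleib : ∀ (n : ℕ) (a b : S),
      θ n (a * b) = ∑ p ∈ Finset.HasAntidiagonal.antidiagonal n, θ p.1 a * θ p.2 b)
    (hiter : ∀ (i j : ℕ) (s : S), θ i (θ j s) = (i + j).choose i • θ (i + j) s)
    (hsimple : ∀ I : Ideal S, (∀ (n : ℕ) (s : S), s ∈ I → θ n s ∈ I) →
      I = ⊥ ∨ I = ⊤)
    (𝔪 : Ideal S) (hm : 𝔪.IsMaximal) :
    let f : S → PowerSeries (S ⧸ 𝔪) := fun s =>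
      PowerSeries.mk fun n => Ideal.Quotient.mk 𝔪 (θ n s)
    let θt : ℕ → PowerSeries (S ⧸ 𝔪) → PowerSeries (S ⧸ 𝔪) := fun n g =>
      PowerSeries.mk fun m => ((m + n).choose n : ℕ) • coeff (m + n) g
    f 1 = 1 ∧
    (∀ a b : S, f (a + b) = f a + f b) ∧
    (∀ a b : S, f (a * b) = f a * f b) ∧
    Function.Injective f ∧
    (∀ (n : ℕ) (s : S), θt n (f s) = f (θ n s)) := by
  intro f θt
  -- θ n 0 = 0
  have hzero : ∀ n, θ n 0 = 0 := by
    intro n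
    have := hadd n 0 0
    rw [add_zero] at this
    exact (left_eq_add.mp this)
  -- θ n (-x) = - θ n x
  have hneg : ∀ n x, θ n (-x) = -θ n x := by
    intro n x
    have := hadd n x (-x)
    rw [add_neg_cancel, hzero] at this
    exact (eq_neg_of_add_eq_zero_right this.symm)
  -- θ n 1 = 0 for n > 0
  have hone : ∀ n, 0 < n → θ n 1 = 0 := by
    intro n
    induction n using Nat.strong_induction_on with
    | _ n ih =>
      intro hn
      have h := hleib n 1 1
      rw [mul_one, Finset.Nat.sum_antidiagonal_eq_sum_range_succ_mk,
        Finset.sum_range_succ] at h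
      have hmid : ∑ k ∈ Finset.range n, θ k 1 * θ (n - k) 1 = θ n 1 := by
        rw [Finset.sum_eq_single 0]
        · simp [h0]
        · intro k hk hk0
          rw [ih k (Finset.mem_range.mp hk) (Nat.pos_of_ne_zero hk0), zero_mul]
        · intro hcon
          exact absurd (Finset.mem_range.mpr hn) hcon
      rw [hmid, Nat.sub_self, h0, mul_one] at h
      exact (add_eq_left.mp h.symm)
  have hf1 : f 1 = 1 := by
    ext n
    cases n with
    | zero => simp [f, h0]
    | succ m =>
      simp [f, hone (m+1) (Nat.succ_pos m), coeff_one]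
  have hfadd : ∀ a b : S, f (a + b) = f a + f b := by
    intro a b
    ext n
    simp [f, hadd]
  have hfmul : ∀ a b : S, f (a * b) = f a * f b := by
    intro a b
    ext n
    simp only [f, coeff_mk, coeff_mul, hleib, map_sum, map_mul]
  -- coefficients of f s lie in 𝔪 iff ...
  have hK : ∀ a : S, f a = 0 → a = 0 := by
    intro a ha
    have hmem : ∀ n, θ n a ∈ 𝔪 := by
      intro n
      have := congrArg (coeff n) ha
      simpa [f, Ideal.Quotient.eq_zero_iff_mem] using this
    let K : Ideal S :=
      { carrier := {s | ∀ n, θ n s ∈ 𝔪}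
        add_mem' := fun hx hy n => by rw [hadd]; exact 𝔪.add_mem (hx n) (hy n)
        zero_mem' := fun n => by rw [hzero]; exact 𝔪.zero_mem
        smul_mem' := fun r s hs n => by
          rw [smul_eq_mul, hleib]
          exact Ideal.sum_mem _ (fun p _ => Ideal.mul_mem_left _ _ (hs p.2)) }
    have hstab : ∀ (n : ℕ) (s : S), s ∈ K → θ n s ∈ K := by
      intro n s hs m
      rw [hiter]
      exact nsmul_mem (hs (m + n)) _
    rcases hsimple K hstab with hbot | htop
    · have : a ∈ K := hmem
      rw [hbot] at this
      exact this
    · exfalso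
      have h1 : (1 : S) ∈ K := htop ▸ Submodule.mem_top
      have := h1 0
      rw [h0] at this
      exact hm.ne_top (Ideal.eq_top_of_isUnit_mem _ this isUnit_one)
  have hinj : Function.Injective f := by
    intro a b hab
    have : f (a + -b) = 0 := by
      rw [hfadd]
      have hfneg : f (-b) = - f b := by
        ext n; simp [f, hneg]
      rw [hfneg, hab, add_neg_cancel]
    have := hK _ this
    have h' : a - b = 0 := by rwa [sub_eq_add_neg]
    exact sub_eq_zero.mp h'
  refine ⟨hf1, hfadd, hfmul, hinj, ?_⟩
  intro n s
  ext m
  simp only [θt, f, coeff_mk, hiter]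
  rw [map_nsmul]
  rw [show (m + n).choose m = (m + n).choose n from by
    rw [← Nat.choose_symm (Nat.le_add_right m n)]; congr 1; omega]
end

section
/- Let C be a field of characteristic 0, S = C[s,t,1/(3s²−1)]/(s³−s−t²) with the derivation ∂ extending d/dt on C[t] (so ∂(s) = 2t/(3s²−1)). Suppose I is a nonzero ideal of S with ∂(I) ⊆ I. Then I = S. -/
set_option maxHeartbeats 1000000
set_option synthInstance.maxHeartbeats 1000000

open MvPolynomial

/-- The ring `C[s,t]/(s³ - s - t²)`, with `s = X 0`, `t = X 1`. -/
noncomputable abbrev S0 (C : Type) [Field C] : Type :=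
  MvPolynomial (Fin 2) C ⧸
    Ideal.span {(X 0 : MvPolynomial (Fin 2) C) ^ 3 - X 0 - X 1 ^ 2}

noncomputable def sbar (C : Type) [Field C] : S0 C := Ideal.Quotient.mk _ (X 0)
noncomputable def tbar (C : Type) [Field C] : S0 C := Ideal.Quotient.mk _ (X 1)

/-- `S = C[s,t,1/(3s²-1)]/(s³-s-t²)`. -/
noncomputable abbrev Sring (C : Type) [Field C] : Type :=
  Localization.Away (3 * sbar C ^ 2 - 1)

noncomputable def sS (C : Type) [Field C] : Sring C :=
  algebraMap (S0 C) (Sring C) (sbar C)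
noncomputable def tS (C : Type) [Field C] : Sring C :=
  algebraMap (S0 C) (Sring C) (tbar C)

/-- The inclusion `C[t] → S`, `t ↦ t`. -/
noncomputable def phi (C : Type) [Field C] : Polynomial C →+* Sring C :=
  Polynomial.eval₂RingHom
    ((algebraMap (S0 C) (Sring C)).comp (algebraMap C (S0 C))) (tS C)

variable (C : Type) [Field C]

lemma phiX : phi C Polynomial.X = tS C := by
  simp [phi]

lemma rel : sS C ^ 3 = sS C + tS C ^ 2 := by
  have h0 : sbar C ^ 3 - sbar C - tbar C ^ 2 = 0 := by
    rw [sbar, tbar, ← map_pow, ← map_pow, ← map_sub, ← map_sub,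
      Ideal.Quotient.eq_zero_iff_mem]
    exact Ideal.subset_span rfl
  have := congrArg (algebraMap (S0 C) (Sring C)) h0
  rw [map_sub, map_sub, map_pow, map_pow, map_zero] at this
  rw [show algebraMap (S0 C) (Sring C) (sbar C) = sS C from rfl,
    show algebraMap (S0 C) (Sring C) (tbar C) = tS C from rfl] at this
  rwa [sub_sub, sub_eq_zero] at this

lemma phiCC (r : C) :
    phi C (Polynomial.C r) = algebraMap (S0 C) (Sring C) (Ideal.Quotient.mk _ (MvPolynomial.C r)) := by
  simp [phi]
  rfl

lemma decomp0 (y : S0 C) : ∃ a b c : Polynomial C,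
    algebraMap (S0 C) (Sring C) y = phi C a + phi C b * sS C + phi C c * sS C ^ 2 := by
  obtain ⟨q, rfl⟩ := Ideal.Quotient.mk_surjective y
  induction q using MvPolynomial.induction_on with
  | C r =>
    exact ⟨Polynomial.C r, 0, 0, by rw [phiCC, map_zero]; ring⟩
  | add p q hp hq =>
    obtain ⟨a, b, c, h1⟩ := hp
    obtain ⟨a', b', c', h2⟩ := hq
    exact ⟨a + a', b + b', c + c', by rw [map_add, map_add, h1, h2]; push_cast [map_add]; ring⟩
  | mul_X p i hp =>
    obtain ⟨a, b, c, h1⟩ := hp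
    fin_cases i <;> simp only [Fin.isValue, Fin.zero_eta, Fin.mk_one]
    · refine ⟨c * Polynomial.X ^ 2, a + c, b, ?_⟩
      rw [map_mul, map_mul, h1,
        show algebraMap (S0 C) (Sring C) (Ideal.Quotient.mk _ (X 0)) = sS C from rfl]
      simp only [map_mul, map_add, map_pow, phiX]
      have e1 : (phi C a + phi C b * sS C + phi C c * sS C ^ 2) * sS C
          = phi C a * sS C + phi C b * sS C ^ 2 + phi C c * sS C ^ 3 := by ring
      rw [e1, rel C]
      ring
    · refine ⟨a * Polynomial.X, b * Polynomial.X, c * Polynomial.X, ?_⟩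
      rw [map_mul, map_mul, h1,
        show algebraMap (S0 C) (Sring C) (Ideal.Quotient.mk _ (X 1)) = tS C from rfl]
      simp only [map_mul, map_add, map_pow, phiX]
      ring

lemma decomp (z : Sring C) : ∃ (n : ℕ) (a b c : Polynomial C),
    z * (algebraMap (S0 C) (Sring C) (3 * sbar C ^ 2 - 1)) ^ n
      = phi C a + phi C b * sS C + phi C c * sS C ^ 2 := by
  obtain ⟨⟨y, m⟩, hm⟩ := IsLocalization.surj (Submonoid.powers (3 * sbar C ^ 2 - 1)) z
  obtain ⟨n, hn⟩ := m.2
  obtain ⟨a, b, c, h⟩ := decomp0 C y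
  exact ⟨n, a, b, c, by rw [← h, ← hm, ← hn, map_pow]⟩

lemma Firr :
    Irreducible ((Polynomial.X ^ 3 - Polynomial.X
      - Polynomial.C (Polynomial.X ^ 2) : Polynomial (Polynomial C)).map
      (algebraMap (Polynomial C) (FractionRing (Polynomial C)))) := by
  set K := FractionRing (Polynomial C)
  set φK := algebraMap (Polynomial C) K with hφK
  set F : Polynomial (Polynomial C) := Polynomial.X ^ 3 - Polynomial.X
      - Polynomial.C (Polynomial.X ^ 2) with hF
  have hm : F.Monic := by
    have : F = Polynomial.X ^ 3
        - (Polynomial.X + Polynomial.C (Polynomial.X ^ 2)) := by ring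
    rw [this]
    apply Polynomial.monic_X_pow_sub
    apply lt_of_le_of_lt (Polynomial.degree_add_le _ _)
    simp only [Polynomial.degree_X, Polynomial.degree_C (pow_ne_zero 2 Polynomial.X_ne_zero)]
    norm_num
  have hdeg : F.natDegree = 3 := by
    rw [hF]
    compute_degree!
  have hdegm : (F.map φK).natDegree = 3 := by rw [hm.natDegree_map]; exact hdeg
  rw [Polynomial.irreducible_iff_roots_eq_zero_of_degree_le_three
    (by omega) (by omega)]
  rw [Multiset.eq_zero_iff_forall_notMem]
  intro r hr
  have hroot : (F.map φK).eval r = 0 :=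
    Polynomial.isRoot_of_mem_roots hr
  have hint : IsIntegral (Polynomial C) r := by
    refine ⟨F, hm, ?_⟩
    rwa [← Polynomial.eval_map]
  obtain ⟨p, hp⟩ := IsIntegrallyClosed.isIntegral_iff.mp hint
  rw [← hp, Polynomial.eval_map, Polynomial.eval₂_hom] at hroot
  have hev : F.eval p = 0 := IsFractionRing.injective (Polynomial C) K
    (by rwa [map_zero])
  rw [hF] at hev
  simp only [Polynomial.eval_sub, Polynomial.eval_pow, Polynomial.eval_X,
    Polynomial.eval_C] at hev
  rw [sub_sub, sub_eq_zero] at hev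
  by_cases hp0 : p.natDegree = 0
  · obtain ⟨e, rfl⟩ := Polynomial.natDegree_eq_zero.mp hp0
    have h2 := congrArg Polynomial.natDegree hev
    rw [← map_pow] at h2
    rw [Polynomial.natDegree_C] at h2
    rw [add_comm, Polynomial.natDegree_X_pow_add_C] at h2
    exact two_ne_zero h2.symm
  · have h1 : (p ^ 3).natDegree = 3 * p.natDegree := Polynomial.natDegree_pow p 3
    have h2 : (p + Polynomial.X ^ 2).natDegree ≤ max p.natDegree 2 := by
      apply le_trans (Polynomial.natDegree_add_le _ _)
      simp [Polynomial.natDegree_X_pow]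
    rw [hev] at h1
    rcases max_cases p.natDegree 2 with ⟨h, _⟩ | ⟨h, _⟩ <;> omega

lemma uIsUnit : IsUnit (algebraMap (S0 C) (Sring C) (3 * sbar C ^ 2 - 1)) :=
  IsLocalization.map_units (Sring C) ⟨3 * sbar C ^ 2 - 1, Submonoid.mem_powers _⟩

lemma keyD (I : Ideal (Sring C)) (hI : I ≠ ⊥) :
    ∃ D : Polynomial C, D ≠ 0 ∧ phi C D ∈ I := by
  obtain ⟨x, hxI, hx0⟩ := (Submodule.ne_bot_iff I).mp hI
  obtain ⟨n, a, b, c, hx⟩ := decomp C x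
  have hu := uIsUnit C
  have hw : phi C a + phi C b * sS C + phi C c * sS C ^ 2 ∈ I := by
    rw [← hx]
    exact Ideal.mul_mem_right (I := I)
      (b := (algebraMap (S0 C) (Sring C)) (3 * sbar C ^ 2 - 1) ^ n) hxI
  have habc : ¬(a = 0 ∧ b = 0 ∧ c = 0) := by
    rintro ⟨rfl, rfl, rfl⟩
    apply hx0
    have h0 : phi C (0 : Polynomial C) = 0 := map_zero (phi C)
    have hx2 : x * (algebraMap (S0 C) (Sring C)) (3 * sbar C ^ 2 - 1) ^ n = 0 := by
      rw [hx, h0]; ring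
    exact ((hu.pow n).mul_left_eq_zero).mp hx2
  set K := FractionRing (Polynomial C)
  set φK := algebraMap (Polynomial C) K with hφK
  set F : Polynomial (Polynomial C) := Polynomial.X ^ 3 - Polynomial.X
      - Polynomial.C (Polynomial.X ^ 2) with hF
  set G : Polynomial (Polynomial C) := Polynomial.C a + Polynomial.C b * Polynomial.X
      + Polynomial.C c * Polynomial.X ^ 2 with hG
  have hG0 : G ≠ 0 := by
    intro h
    refine habc ⟨?_, ?_, ?_⟩
    · simpa [hG] using congrArg (fun q => Polynomial.coeff q 0) h
    · simpa [hG] using congrArg (fun q => Polynomial.coeff q 1) h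
    · simpa [hG] using congrArg (fun q => Polynomial.coeff q 2) h
  have hGd : G.natDegree ≤ 2 := by rw [hG]; compute_degree
  have hm : F.Monic := by
    have h9 : F = Polynomial.X ^ 3
        - (Polynomial.X + Polynomial.C (Polynomial.X ^ 2)) := by rw [hF]; ring
    rw [h9]
    apply Polynomial.monic_X_pow_sub
    apply lt_of_le_of_lt (Polynomial.degree_add_le _ _)
    simp only [Polynomial.degree_X,
      Polynomial.degree_C (pow_ne_zero 2 Polynomial.X_ne_zero)]
    norm_num
  have hinj : Function.Injective φK := IsFractionRing.injective (Polynomial C) K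
  have hGm0 : G.map φK ≠ 0 := (Polynomial.map_ne_zero_iff hinj).mpr hG0
  have hndvd : ¬ (F.map φK ∣ G.map φK) := by
    intro hdvd
    have h1 := Polynomial.natDegree_le_of_dvd hdvd hGm0
    have h2 : (G.map φK).natDegree ≤ 2 :=
      Polynomial.natDegree_map_le.trans hGd
    have h3 : (F.map φK).natDegree = 3 := by
      rw [hm.natDegree_map, hF]; compute_degree!
    omega
  have hcop : IsCoprime (F.map φK) (G.map φK) :=
    ((Firr C).coprime_iff_not_dvd).mpr hndvd
  obtain ⟨p, q, hpq⟩ := hcop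
  set M := nonZeroDivisors (Polynomial C)
  obtain ⟨b1, hP⟩ := IsLocalization.integerNormalization_map_to_map M p
  obtain ⟨b2, hQ⟩ := IsLocalization.integerNormalization_map_to_map M q
  set P := IsLocalization.integerNormalization M p with hPdef
  set Q := IsLocalization.integerNormalization M q with hQdef
  rw [← algebraMap_smul K (b1 : Polynomial C) p, Polynomial.smul_eq_C_mul] at hP
  rw [← algebraMap_smul K (b2 : Polynomial C) q, Polynomial.smul_eq_C_mul] at hQ
  have hID : Polynomial.C (b2 : Polynomial C) * P * F
      + Polynomial.C (b1 : Polynomial C) * Q * G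
      = Polynomial.C ((b1 : Polynomial C) * (b2 : Polynomial C)) := by
    apply Polynomial.map_injective φK hinj
    rw [Polynomial.map_add, Polynomial.map_mul, Polynomial.map_mul,
      Polynomial.map_mul, Polynomial.map_mul, hP, hQ,
      Polynomial.map_C, Polynomial.map_C, Polynomial.map_C, map_mul]
    have h2 : (Polynomial.C (φK (b1 : Polynomial C)))
        * (Polynomial.C (φK (b2 : Polynomial C)))
        * (p * F.map φK + q * G.map φK)
        = Polynomial.C (φK (b1 : Polynomial C))
          * Polynomial.C (φK (b2 : Polynomial C)) := by rw [hpq, mul_one]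
    rw [Polynomial.C_mul, ← h2]
    ring
  set E := Polynomial.eval₂RingHom (phi C) (sS C) with hE
  have e1 : E Polynomial.X = sS C := Polynomial.eval₂_X _ _
  have e2 : ∀ y : Polynomial C, E (Polynomial.C y) = phi C y :=
    fun y => Polynomial.eval₂_C _ _
  have hEF : E F = 0 := by
    rw [hF, map_sub, map_sub, map_pow, e1, e2, map_pow, phiX, rel C]
    ring
  have hEG : E G = phi C a + phi C b * sS C + phi C c * sS C ^ 2 := by
    rw [hG, map_add, map_add, map_mul, map_mul, map_pow, e1]
    simp only [e2]
  have key := congrArg E hID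
  simp only [map_add, map_mul, e2] at key
  rw [hEF, hEG] at key
  refine ⟨(b1 : Polynomial C) * (b2 : Polynomial C), ?_, ?_⟩
  · exact mul_ne_zero (nonZeroDivisors.ne_zero b1.2) (nonZeroDivisors.ne_zero b2.2)
  · rw [map_mul, ← key]
    exact I.add_mem (I.mul_mem_left _ I.zero_mem) (I.mul_mem_left _ hw)

lemma unit_case (I : Ideal (Sring C)) (D : Polynomial C) (hD0 : D ≠ 0)
    (h0 : D.natDegree = 0) (hDI : phi C D ∈ I) : I = ⊤ := by
  have hDC := Polynomial.eq_C_of_natDegree_eq_zero h0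
  have he : D.coeff 0 ≠ 0 := by
    intro h
    exact hD0 (by rw [hDC, h, map_zero])
  have hunit : IsUnit (phi C D) := by
    rw [hDC]
    exact (Polynomial.isUnit_C.mpr (isUnit_iff_ne_zero.mpr he)).map (phi C)
  exact Ideal.eq_top_of_isUnit_mem I hDI hunit

lemma descent [CharZero C] (d : Sring C → Sring C)
    (hext : ∀ f : Polynomial C, d (phi C f) = phi C (Polynomial.derivative f))
    (I : Ideal (Sring C)) (hdI : ∀ x ∈ I, d x ∈ I) :
    ∀ (n : ℕ) (D : Polynomial C), D ≠ 0 → D.natDegree ≤ n → phi C D ∈ I → I = ⊤ := by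
  intro n
  induction n with
  | zero =>
    intro D hD0 hDdeg hDI
    exact unit_case C I D hD0 (Nat.le_zero.mp hDdeg) hDI
  | succ n ih =>
    intro D hD0 hDdeg hDI
    by_cases h0 : D.natDegree = 0
    · exact unit_case C I D hD0 h0 hDI
    · have hne : Polynomial.derivative D ≠ 0 := by
        intro h
        exact h0 (Polynomial.natDegree_eq_zero_of_derivative_eq_zero h)
      have hdeg : (Polynomial.derivative D).natDegree ≤ n := by
        have := Polynomial.natDegree_derivative_lt h0
        omega
      have hmem : phi C (Polynomial.derivative D) ∈ I := by
        have := hdI _ hDI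
        rwa [hext] at this
      exact ih (Polynomial.derivative D) hne hdeg hmem


/-- Let `char C = 0` and `S = C[s,t,1/(3s²-1)]/(s³-s-t²)` with
the derivation `∂` extending `d/dt` on `C[t]` (so `∂(s) = 2t/(3s²-1)`).
Every nonzero ideal `I` of `S` with `∂(I) ⊆ I` equals `S`. -/
theorem stmt14 (C : Type) [Field C] [CharZero C] (d : Sring C → Sring C)
    (hadd : ∀ a b : Sring C, d (a + b) = d a + d b)
    (hleib : ∀ a b : Sring C, d (a * b) = d a * b + a * d b)
    (hext : ∀ f : Polynomial C, d (phi C f) = phi C (Polynomial.derivative f))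
    (hs : d (sS C) * (3 * sS C ^ 2 - 1) = 2 * tS C) :
    ∀ I : Ideal (Sring C), I ≠ ⊥ → (∀ x ∈ I, d x ∈ I) → I = ⊤ := by
  intro I hIbot hdI
  obtain ⟨D, hD0, hDI⟩ := keyD C I hIbot
  exact descent C d hext I hdI D.natDegree D hD0 le_rfl hDI
end
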